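/- Let G be a group and K ≤ G a subgroup. Then for all g, γ ∈ G: ‖gγ‖_K ≤ ‖g‖_K + ‖γ‖_K, ‖g⁻¹‖_K = ‖g‖_K, and ‖g^γ‖_K = ‖g‖_K (conjugation invariance). Consequently, Core_∅(K) = {g ∈ G : ‖g‖_K < ∞} is a normal subgroup of G. -/

import Mathlib

open Filter MeasureTheory
open scoped ENNReal Topology

noncomputable section

namespace Paper

variable {G : Type*} [Group G]

/-- Conjugation on subgroups: `conjSubgroup g K = g K g⁻¹`. -/
def conjSubgroup (g : G) (K : Subgroup G) : Subgroup G :=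
  K.map (MulAut.conj g).toMonoidHom

lemma mem_conjSubgroup {g x : G} {K : Subgroup G} :
    x ∈ conjSubgroup g K ↔ g⁻¹ * x * g ∈ K := by
  constructor
  · rintro ⟨y, hy, rfl⟩
    simpa [MulAut.conj_apply, mul_assoc] using hy
  · intro h
    exact ⟨g⁻¹ * x * g, h, by simp [MulAut.conj_apply]; group⟩

lemma conjSubgroup_conjSubgroup (a b : G) (K : Subgroup G) :
    conjSubgroup a (conjSubgroup b K) = conjSubgroup (a * b) K := by
  ext x
  simp only [mem_conjSubgroup]
  have e : b⁻¹ * (a⁻¹ * x * a) * b = (a * b)⁻¹ * x * (a * b) := by group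
  rw [e]

lemma conjSubgroup_eq_of_mem_normalizer {n : G} {K : Subgroup G}
    (hn : n ∈ (Subgroup.normalizer (K : Set G))) : conjSubgroup n K = K := by
  ext x
  rw [mem_conjSubgroup]
  exact (Subgroup.mem_normalizer_iff''.mp hn x).symm

/-- `Θ = Θ_G(K)`: the set of right cosets of the normalizer of `K` in `G`. -/
abbrev NormCoset (K : Subgroup G) := Quotient (QuotientGroup.rightRel (Subgroup.normalizer (K : Set G)))

/-- The conjugate `K^θ = g⁻¹ K g` for `θ = N_G(K)·g ∈ Θ` (it does not depend on the
chosen representative of the coset). -/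
def conjCoset (K : Subgroup G) (θ : NormCoset K) : Subgroup G :=
  conjSubgroup θ.out⁻¹ K

lemma conjSubgroup_inv_eq_of_rel {a b : G} {K : Subgroup G}
    (h : QuotientGroup.rightRel (Subgroup.normalizer (K : Set G)) a b) :
    conjSubgroup a⁻¹ K = conjSubgroup b⁻¹ K := by
  rw [QuotientGroup.rightRel_apply] at h
  have e : conjSubgroup a⁻¹ K = conjSubgroup (b⁻¹ * (b * a⁻¹)) K := by
    congr 1; group
  rw [e, ← conjSubgroup_conjSubgroup, conjSubgroup_eq_of_mem_normalizer h]

lemma conjCoset_mk (K : Subgroup G) (a : G) :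
    conjCoset K (Quotient.mk (QuotientGroup.rightRel (Subgroup.normalizer (K : Set G))) a) =
      conjSubgroup a⁻¹ K := by
  apply conjSubgroup_inv_eq_of_rel
  exact Quotient.mk_out (s := QuotientGroup.rightRel (Subgroup.normalizer (K : Set G))) a

/-- The right action of `G` on `Θ`. -/
def shift (K : Subgroup G) (θ : NormCoset K) (g : G) : NormCoset K :=
  Quotient.mk (QuotientGroup.rightRel (Subgroup.normalizer (K : Set G))) (θ.out * g)

lemma rel_mul {K : Subgroup G} {a b : G} (h : QuotientGroup.rightRel (Subgroup.normalizer (K : Set G)) a b)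
    (g : G) : QuotientGroup.rightRel (Subgroup.normalizer (K : Set G)) (a * g) (b * g) := by
  rw [QuotientGroup.rightRel_apply] at h ⊢
  have e : b * g * (a * g)⁻¹ = b * a⁻¹ := by group
  rw [e]; exact h

lemma shift_mk (K : Subgroup G) (a g : G) :
    shift K (Quotient.mk (QuotientGroup.rightRel (Subgroup.normalizer (K : Set G))) a) g =
      Quotient.mk (QuotientGroup.rightRel (Subgroup.normalizer (K : Set G))) (a * g) := by
  apply Quotient.sound
  exact rel_mul (Quotient.mk_out (s := QuotientGroup.rightRel (Subgroup.normalizer (K : Set G))) a) g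

lemma shift_shift (K : Subgroup G) (θ : NormCoset K) (g h : G) :
    shift K (shift K θ g) h = shift K θ (g * h) := by
  induction θ using Quotient.inductionOn with
  | h a => rw [shift_mk, shift_mk, shift_mk, mul_assoc]

lemma shift_one (K : Subgroup G) (θ : NormCoset K) : shift K θ 1 = θ := by
  induction θ using Quotient.inductionOn with
  | h a => rw [shift_mk, mul_one]

lemma shift_injective (K : Subgroup G) (g : G) :
    Function.Injective (fun θ : NormCoset K => shift K θ g) := by
  intro θ₁ θ₂ h
  have h2 := congrArg (fun θ : NormCoset K => shift K θ g⁻¹) h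
  simpa [shift_shift, shift_one] using h2

lemma conjCoset_shift (K : Subgroup G) (θ : NormCoset K) (g : G) :
    conjCoset K (shift K θ g) = conjSubgroup g⁻¹ (conjCoset K θ) := by
  induction θ using Quotient.inductionOn with
  | h a =>
    rw [shift_mk, conjCoset_mk, conjCoset_mk, conjSubgroup_conjSubgroup]
    congr 1
    group

/-- `‖g‖_K = #{θ ∈ Θ : g ∉ K^θ} ∈ ℕ ∪ {∞}`. -/
def normOf (K : Subgroup G) (g : G) : ℕ∞ :=
  {θ : NormCoset K | g ∉ conjCoset K θ}.encard

/-- `Core_∅(K) = {g : ‖g‖_K < ∞}`, as a subgroup of `G`. -/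
def emptyCore (K : Subgroup G) : Subgroup G where
  carrier := {g | normOf K g < ⊤}
  one_mem' := by
    have h : {θ : NormCoset K | (1 : G) ∉ conjCoset K θ} = ∅ := by
      ext θ; simp [Subgroup.one_mem]
    simp [normOf, Set.mem_setOf_eq, h]
  mul_mem' := by
    intro a b ha hb
    simp only [Set.mem_setOf_eq, normOf] at ha hb ⊢
    have hsub : {θ : NormCoset K | a * b ∉ conjCoset K θ} ⊆
        {θ : NormCoset K | a ∉ conjCoset K θ} ∪ {θ : NormCoset K | b ∉ conjCoset K θ} := by
      intro θ hθ
      by_contra hc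
      simp only [Set.mem_union, Set.mem_setOf_eq, not_or, not_not] at hc
      exact hθ (mul_mem hc.1 hc.2)
    calc {θ : NormCoset K | a * b ∉ conjCoset K θ}.encard
        ≤ ({θ : NormCoset K | a ∉ conjCoset K θ} ∪
            {θ : NormCoset K | b ∉ conjCoset K θ}).encard := Set.encard_mono hsub
      _ ≤ _ + _ := Set.encard_union_le _ _
      _ < ⊤ := WithTop.add_lt_top.mpr ⟨ha, hb⟩
  inv_mem' := by
    intro a ha
    have h : {θ : NormCoset K | a⁻¹ ∉ conjCoset K θ} =
        {θ : NormCoset K | a ∉ conjCoset K θ} := by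
      ext θ; simp
    simpa only [Set.mem_setOf_eq, normOf, h] using ha

lemma mem_emptyCore {K : Subgroup G} {g : G} :
    g ∈ emptyCore K ↔ normOf K g < ⊤ := Iff.rfl

/-- `Core_∅(K)` is a normal subgroup of `G`. -/
instance emptyCore_normal (K : Subgroup G) : (emptyCore K).Normal := by
  constructor
  intro n hn g
  rw [mem_emptyCore] at hn ⊢
  rw [normOf, Set.encard_lt_top_iff] at hn ⊢
  have hset : {θ : NormCoset K | g * n * g⁻¹ ∉ conjCoset K θ} =
      (fun θ : NormCoset K => shift K θ g) ⁻¹' {θ : NormCoset K | n ∉ conjCoset K θ} := by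
    ext θ
    simp only [Set.mem_setOf_eq, Set.mem_preimage, conjCoset_shift, mem_conjSubgroup]
    have e : g⁻¹⁻¹ * n * g⁻¹ = g * n * g⁻¹ := by group
    rw [e]
  rw [hset]
  exact Set.Finite.preimage (Set.injOn_of_injective (shift_injective K g)) hn

/-! A conjugate of `K` that misses `g * γ` misses `g` or `γ`, and each conjugate is closed under
inversion. Conjugating `g` by `γ` corresponds to translating `Θ` on the right by `γ`, a bijection
of `Θ`, so it does not change the number of conjugates that miss `g`. -/

lemma encard_setOf_mul_notMem_le {ι : Type*} (H : ι → Subgroup G) (g γ : G) :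
    {i | g * γ ∉ H i}.encard ≤ {i | g ∉ H i}.encard + {i | γ ∉ H i}.encard := by
  refine (Set.encard_mono fun i hi => ?_).trans (Set.encard_union_le _ _)
  by_contra h
  simp only [Set.mem_union, Set.mem_ofPred_eq, not_or, not_not] at h
  exact hi (mul_mem h.1 h.2)

lemma normOf_mul_le (K : Subgroup G) (g γ : G) :
    normOf K (g * γ) ≤ normOf K g + normOf K γ :=
  encard_setOf_mul_notMem_le (conjCoset K) g γ

lemma normOf_inv (K : Subgroup G) (g : G) : normOf K g⁻¹ = normOf K g := by
  simp only [normOf, inv_mem_iff]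

lemma shift_bijective (K : Subgroup G) (g : G) :
    Function.Bijective (fun θ : NormCoset K => shift K θ g) :=
  Function.bijective_iff_has_inverse.mpr
    ⟨fun θ => shift K θ g⁻¹, fun θ => by simp [shift_shift, shift_one],
      fun θ => by simp [shift_shift, shift_one]⟩

lemma mem_conjCoset_shift_iff (K : Subgroup G) (θ : NormCoset K) (g γ : G) :
    g ∈ conjCoset K (shift K θ γ) ↔ γ * g * γ⁻¹ ∈ conjCoset K θ := by
  rw [conjCoset_shift, mem_conjSubgroup, inv_inv]

lemma normOf_conj (K : Subgroup G) (g γ : G) : normOf K (γ⁻¹ * g * γ) = normOf K g := by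
  have h : {θ : NormCoset K | γ⁻¹ * g * γ ∉ conjCoset K θ} =
      (fun θ => shift K θ γ⁻¹) ⁻¹' {θ | g ∉ conjCoset K θ} := by
    ext θ
    simp only [Set.mem_ofPred_eq, Set.mem_preimage, mem_conjCoset_shift_iff, inv_inv]
  rw [normOf, normOf, h, Set.encard_preimage_of_bijective (shift_bijective K γ⁻¹)]

/-- The properties of the "norm" `‖g‖_K = #{θ ∈ Θ : g ∉ K^θ}`: subadditivity,
symmetry under inversion, and conjugation invariance; consequently
`Core_∅(K) = {g : ‖g‖_K < ∞}` is a normal subgroup of `G`. -/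
theorem normOf_properties {G : Type*} [Group G] (K : Subgroup G) :
    (∀ g γ : G, normOf K (g * γ) ≤ normOf K g + normOf K γ) ∧
    (∀ g : G, normOf K g⁻¹ = normOf K g) ∧
    (∀ g γ : G, normOf K (γ⁻¹ * g * γ) = normOf K g) ∧
    ∃ H : Subgroup G, H.Normal ∧ (H : Set G) = {g : G | normOf K g < ⊤} :=
  ⟨normOf_mul_le K, normOf_inv K, normOf_conj K, emptyCore K, emptyCore_normal K, rfl⟩

end Paper
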